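/- arXiv:2107.03351 — 2 statements merged into one kernel-verified Lean document; each statement's English description precedes it below -/
import Mathlib

section
/- Fix odd integers q₁,...,q₅ with q₂,q₃,q₄ > 0, q₅ < 0, and q₁+q₅ < 0, and set q_m = max{q₂,q₃,q₄}. Let B ∈ V, and let h₀ ∈ Sp2 be any element whose second column has first four entries equal to conj(s₅(B))/|s₅(B)|. Then Σ_{ℓ=1}^5 (|(Bh₀)_{ℓ2}|² + |(Bh₀)_{ℓ4}|²) q_ℓ < 0. -/
open Finset

noncomputable section

/-- SU(5): 5×5 special unitary complex matrices. -/
def SU5 : Set (Matrix (Fin 5) (Fin 5) ℂ) :=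
  {A | A * A.conjTranspose = 1 ∧ A.det = 1}

/-- The image of the embedding Sp(2) ↪ SU(5). -/
def Sp2 : Set (Matrix (Fin 5) (Fin 5) ℂ) :=
  {h | h ∈ SU5 ∧
    (∀ i : Fin 5, h i 4 = if i = 4 then 1 else 0) ∧
    (∀ i : Fin 5, h 4 i = if i = 4 then 1 else 0) ∧
    (∀ i j : Fin 5, i < 2 → j < 2 →
      h (i + 2) (j + 2) = (starRingEnd ℂ) (h i j) ∧
      h (i + 2) j = -(starRingEnd ℂ) (h i (j + 2)))}

/-- q_m = max{q₂,q₃,q₄} (0-indexed: entries 1,2,3). -/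
def qm (q : Fin 5 → ℤ) : ℤ := max (q 1) (max (q 2) (q 3))

/-- Squared norm of the first four entries of row `i` of `B`. -/
def rowNormSq (B : Matrix (Fin 5) (Fin 5) ℂ) (i : Fin 5) : ℝ :=
  ∑ j : Fin 4, ‖B i j.castSucc‖ ^ 2

/-- The open set V ⊆ SU(5). -/
def V (q : Fin 5 → ℤ) : Set (Matrix (Fin 5) (Fin 5) ℂ) :=
  {B | B ∈ SU5 ∧
    (∀ i j : Fin 5, (i, j) ∉ ({(0,0),(1,1),(2,3),(3,4),(4,2)} : Set (Fin 5 × Fin 5)) →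
      ‖B i j‖ < 1 / (16 * Real.sqrt (qm q))) ∧
    7 / 8 < rowNormSq B 4 ∧
    Real.sqrt (rowNormSq B 0) < Real.sqrt (rowNormSq B 4) ∧
    0 < ∑ ℓ : Fin 5, (‖B ℓ 1‖ ^ 2 + ‖B ℓ 3‖ ^ 2) * (q ℓ : ℝ)}

open Matrix ComplexConjugate

/-!
Indices are 1-based here, as in the paper. Write `s = s₅(B)` and `r = |s|`. The `Sp(2)` relations
make column 4 of `h₀` the quaternionic partner `(-s₃, -s₄, s₁, s₂)/r` of column 2, so row `ℓ` of
`B h₀` has entries `⟨s_ℓ, s⟩/r` and `ω(s_ℓ, s)/r` in columns 2 and 4, `ω` being the complex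
symplectic form. For `ℓ = 5` these are `r` and `0`. Since `h₀` is unitary and fixes `e₅`, the
weight of row 1 is at most `|s₁(B)|² < r²`, and as `q₅` and `q₁ + q₅` are negative integers,
rows 1 and 5 together contribute at most `-r²`. For `ℓ = 2, 3, 4`, orthogonality of the rows of
`B` turns `⟨s_ℓ, s⟩` into `-B_{ℓ5} conj B_{55}`, and every product in `ω(s_ℓ, s)` has a factor
below `d = 1/(16√q_m)`, so each of these rows contributes at most `17 q_m d² / r² = 17/(256 r²)`.
As `r² > 7/8`, the three of them cannot offset `-r²`.
-/

lemma ofReal_sum_norm_sq_eq_mul_conjTranspose_apply {m n : Type*} [Fintype n]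
    (A : Matrix m n ℂ) (i : m) : ((∑ k, ‖A i k‖ ^ 2 : ℝ) : ℂ) = (A * Aᴴ) i i := by
  simp [mul_apply, Complex.mul_conj, Complex.normSq_eq_norm_sq]

lemma sum_norm_sq_mul_apply_of_mul_conjTranspose_eq_one {m n : Type*} [Fintype n]
    [DecidableEq n] (A : Matrix m n ℂ) {U : Matrix n n ℂ} (hU : U * Uᴴ = 1) (i : m) :
    ∑ k, ‖(A * U) i k‖ ^ 2 = ∑ k, ‖A i k‖ ^ 2 := by
  have h : (A * U) * (A * U)ᴴ = A * Aᴴ := by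
    rw [conjTranspose_mul, Matrix.mul_assoc, ← Matrix.mul_assoc U, hU, Matrix.one_mul]
  have key := ofReal_sum_norm_sq_eq_mul_conjTranspose_apply (A * U) i
  rw [h, ← ofReal_sum_norm_sq_eq_mul_conjTranspose_apply] at key
  exact_mod_cast key

lemma sum_mul_conj_eq_zero_of_mul_conjTranspose_eq_one {n : Type*} [Fintype n] [DecidableEq n]
    {A : Matrix n n ℂ} (hA : A * Aᴴ = 1) {i j : n} (hij : i ≠ j) :
    ∑ k, A i k * conj (A j k) = 0 := by
  simpa [mul_apply, one_apply_ne hij] using congrFun (congrFun hA i) j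

lemma mul_le_mul_of_nonneg_of_nonneg_bound {a c x M : ℝ} (ha : 0 ≤ a) (hac : a ≤ c)
    (hxM : x ≤ M) (hM : 0 ≤ M) : a * x ≤ c * M := by
  rcases le_total 0 x with hx | hx <;> nlinarith

namespace Sp2

variable {h : Matrix (Fin 5) (Fin 5) ℂ}

lemma apply_four_of_ne (hh : h ∈ Sp2) {j : Fin 5} (hj : j ≠ 4) : h 4 j = 0 := by
  simpa [hj, eq_comm] using hh.2.2.1 j

lemma mul_apply_one (hh : h ∈ Sp2) (B : Matrix (Fin 5) (Fin 5) ℂ) (ℓ : Fin 5) :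
    (B * h) ℓ 1 = ∑ k : Fin 4, B ℓ k.castSucc * h k.castSucc 1 := by
  have h41 : h (Fin.last 4) 1 = 0 := apply_four_of_ne hh (by decide)
  rw [mul_apply, Fin.sum_univ_castSucc, h41, mul_zero, add_zero]

lemma mul_apply_three (hh : h ∈ Sp2) (B : Matrix (Fin 5) (Fin 5) ℂ) (ℓ : Fin 5) :
    (B * h) ℓ 3 = -B ℓ 0 * conj (h 2 1) - B ℓ 1 * conj (h 3 1)
      + B ℓ 2 * conj (h 0 1) + B ℓ 3 * conj (h 1 1) := by
  obtain ⟨h23, h21⟩ := hh.2.2.2 0 1 (by decide) (by decide)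
  obtain ⟨h33, h31⟩ := hh.2.2.2 1 1 (by decide) (by decide)
  simp only [Fin.reduceAdd] at h23 h21 h33 h31
  rw [mul_apply, Fin.sum_univ_five, h23, h33, h21, h31, apply_four_of_ne hh (by decide)]
  simp only [map_neg, Complex.conj_conj]
  ring

lemma rowNormSq_mul (hh : h ∈ Sp2) (B : Matrix (Fin 5) (Fin 5) ℂ) (i : Fin 5) :
    rowNormSq (B * h) i = rowNormSq B i := by
  have hlast : (B * h) i (Fin.last 4) = B i (Fin.last 4) := by
    simp [mul_apply, hh.2.1]
  have key := sum_norm_sq_mul_apply_of_mul_conjTranspose_eq_one B hh.1.1 i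
  rw [Fin.sum_univ_castSucc, Fin.sum_univ_castSucc (fun k => ‖B i k‖ ^ 2), hlast] at key
  exact add_right_cancel key

end Sp2

lemma rowNormSq_nonneg (M : Matrix (Fin 5) (Fin 5) ℂ) (i : Fin 5) : 0 ≤ rowNormSq M i := by
  unfold rowNormSq
  positivity

lemma norm_sq_add_norm_sq_le_rowNormSq (M : Matrix (Fin 5) (Fin 5) ℂ) (i : Fin 5) :
    ‖M i 1‖ ^ 2 + ‖M i 3‖ ^ 2 ≤ rowNormSq M i := by
  simp only [rowNormSq, Fin.sum_univ_four, Fin.reduceCastSucc]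
  nlinarith [norm_nonneg (M i 0), norm_nonneg (M i 2)]

lemma le_qm {q : Fin 5 → ℤ} {ℓ : Fin 5} (hℓ : ℓ ∈ ({1, 2, 3} : Finset (Fin 5))) : q ℓ ≤ qm q := by
  simp only [Finset.mem_insert, Finset.mem_singleton] at hℓ
  rcases hℓ with rfl | rfl | rfl <;> simp [qm]

def smallBound (q : Fin 5 → ℤ) : ℝ := 1 / (16 * √(qm q : ℝ))

def largeEntries : Finset (Fin 5 × Fin 5) := {(0, 0), (1, 1), (2, 3), (3, 4), (4, 2)}

namespace V

variable {q : Fin 5 → ℤ} {B : Matrix (Fin 5) (Fin 5) ℂ}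

lemma norm_apply_lt (hB : B ∈ V q) {i j : Fin 5} (hij : (i, j) ∉ largeEntries) :
    ‖B i j‖ < smallBound q :=
  hB.2.1 i j (by simpa [largeEntries] using hij)

lemma norm_apply_le_one (hB : B ∈ V q) (i j : Fin 5) : ‖B i j‖ ≤ 1 :=
  entry_norm_bound_of_unitary (mem_unitaryGroup_iff.2 hB.1.1) i j

lemma norm_mul_norm_le (hB : B ∈ V q) {i j k l : Fin 5}
    (h : (i, j) ∉ largeEntries ∨ (k, l) ∉ largeEntries) : ‖B i j‖ * ‖B k l‖ ≤ smallBound q := by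
  rcases h with h | h
  · exact (mul_le_of_le_one_right (norm_nonneg _) (norm_apply_le_one hB k l)).trans
      (norm_apply_lt hB h).le
  · exact (mul_le_of_le_one_left (norm_nonneg _) (norm_apply_le_one hB i j)).trans
      (norm_apply_lt hB h).le

lemma qm_pos (hB : B ∈ V q) : 0 < qm q := by
  have hd : 0 < smallBound q :=
    (norm_nonneg _).trans_lt (norm_apply_lt hB (i := 0) (j := 1) (by decide))
  have hsqrt : 0 < √(qm q : ℝ) := by simpa [smallBound] using hd
  exact_mod_cast Real.sqrt_pos.1 hsqrt

lemma qm_mul_smallBound_sq (hB : B ∈ V q) : (qm q : ℝ) * smallBound q ^ 2 = 1 / 256 := by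
  have hq : (0 : ℝ) < qm q := by exact_mod_cast qm_pos hB
  rw [smallBound, div_pow, mul_pow, Real.sq_sqrt hq.le]
  field_simp
  norm_num

lemma rowNormSq_zero_le (hB : B ∈ V q) : rowNormSq B 0 ≤ rowNormSq B 4 :=
  ((Real.sqrt_lt_sqrt_iff (rowNormSq_nonneg B 0)).1 hB.2.2.2.1).le

end V

def HasAdaptedColumn (h₀ B : Matrix (Fin 5) (Fin 5) ℂ) : Prop :=
  ∀ i : Fin 4, h₀ i.castSucc 1 = conj (B 4 i.castSucc) / (√(rowNormSq B 4) : ℂ)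

section AdaptedColumn

variable {q : Fin 5 → ℤ} {B h₀ : Matrix (Fin 5) (Fin 5) ℂ}

lemma mul_apply_one_of_ne_four (hB : B ∈ SU5) (hh₀ : h₀ ∈ Sp2) (hcol : HasAdaptedColumn h₀ B)
    {ℓ : Fin 5} (hℓ : ℓ ≠ 4) :
    (B * h₀) ℓ 1 = -(B ℓ 4 * conj (B 4 4)) / √(rowNormSq B 4) := by
  have horth := sum_mul_conj_eq_zero_of_mul_conjTranspose_eq_one hB.1 hℓ
  rw [Fin.sum_univ_five] at horth
  simp only [Sp2.mul_apply_one hh₀, hcol _, Fin.sum_univ_four, Fin.reduceCastSucc]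
  linear_combination horth / (√(rowNormSq B 4) : ℂ)

lemma mul_apply_one_four (hh₀ : h₀ ∈ Sp2) (hcol : HasAdaptedColumn h₀ B)
    (hs : rowNormSq B 4 ≠ 0) :
    (B * h₀) 4 1 = √(rowNormSq B 4) := by
  have hr : (√(rowNormSq B 4) : ℂ) ≠ 0 := by
    exact_mod_cast (Real.sqrt_pos.2 ((rowNormSq_nonneg B 4).lt_of_ne' hs)).ne'
  have hsum : ∑ k : Fin 4, B 4 k.castSucc * conj (B 4 k.castSucc) = (√(rowNormSq B 4) : ℂ) ^ 2 := by
    simp only [Complex.mul_conj, Complex.normSq_eq_norm_sq]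
    rw [← Complex.ofReal_pow, Real.sq_sqrt (rowNormSq_nonneg B 4), rowNormSq]
    push_cast
    rfl
  simp only [Sp2.mul_apply_one hh₀, hcol _, mul_div_assoc', ← Finset.sum_div, hsum]
  field_simp

lemma mul_apply_three_eq (hh₀ : h₀ ∈ Sp2) (hcol : HasAdaptedColumn h₀ B)
    (ℓ : Fin 5) :
    (B * h₀) ℓ 3 = (-B ℓ 0 * B 4 2 - B ℓ 1 * B 4 3 + B ℓ 2 * B 4 0 + B ℓ 3 * B 4 1)
      / √(rowNormSq B 4) := by
  have hc : ∀ i : Fin 4, conj (h₀ i.castSucc 1) = B 4 i.castSucc / (√(rowNormSq B 4) : ℂ) := by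
    intro i
    rw [hcol i, map_div₀, Complex.conj_conj, Complex.conj_ofReal]
  have h0 := hc 0
  have h1 := hc 1
  have h2 := hc 2
  have h3 := hc 3
  simp only [Fin.reduceCastSucc] at h0 h1 h2 h3
  rw [Sp2.mul_apply_three hh₀, h0, h1, h2, h3]
  ring

lemma norm_mul_apply_one_le (hB : B ∈ V q) (hh₀ : h₀ ∈ Sp2) (hcol : HasAdaptedColumn h₀ B)
    {ℓ : Fin 5} (hℓ : ℓ ≠ 4) :
    ‖(B * h₀) ℓ 1‖ ≤ smallBound q / √(rowNormSq B 4) := by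
  rw [mul_apply_one_of_ne_four hB.1 hh₀ hcol hℓ, norm_div, norm_neg, norm_mul, Complex.norm_conj,
    Complex.norm_real, Real.norm_of_nonneg (Real.sqrt_nonneg _)]
  gcongr
  exact V.norm_mul_norm_le hB (Or.inr (by decide))

lemma norm_mul_apply_three_le (hB : B ∈ V q) (hh₀ : h₀ ∈ Sp2) (hcol : HasAdaptedColumn h₀ B)
    {ℓ : Fin 5} (hℓ : ℓ ∈ ({1, 2, 3} : Finset (Fin 5))) :
    ‖(B * h₀) ℓ 3‖ ≤ 4 * smallBound q / √(rowNormSq B 4) := by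
  have hsmall : ∀ j k, (j, k) ∈ ({(0, 2), (1, 3), (2, 0), (3, 1)} : Finset (Fin 5 × Fin 5)) →
      (ℓ, j) ∉ largeEntries ∨ (4, k) ∉ largeEntries := by
    revert ℓ
    decide
  have hprod : ∀ j k, (j, k) ∈ ({(0, 2), (1, 3), (2, 0), (3, 1)} : Finset (Fin 5 × Fin 5)) →
      ‖B ℓ j * B 4 k‖ ≤ smallBound q := fun j k hjk => by
    rw [norm_mul]
    exact V.norm_mul_norm_le hB (hsmall j k hjk)
  rw [mul_apply_three_eq hh₀ hcol, norm_div, Complex.norm_real,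
    Real.norm_of_nonneg (Real.sqrt_nonneg _)]
  gcongr
  calc ‖-B ℓ 0 * B 4 2 - B ℓ 1 * B 4 3 + B ℓ 2 * B 4 0 + B ℓ 3 * B 4 1‖
      ≤ ‖B ℓ 0 * B 4 2‖ + ‖B ℓ 1 * B 4 3‖ + ‖B ℓ 2 * B 4 0‖ + ‖B ℓ 3 * B 4 1‖ := by
        have h := norm_add₄_le (a := -(B ℓ 0 * B 4 2)) (b := -(B ℓ 1 * B 4 3))
          (c := B ℓ 2 * B 4 0) (d := B ℓ 3 * B 4 1)
        rwa [norm_neg, norm_neg, ← sub_eq_add_neg, ← neg_mul] at h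
    _ ≤ 4 * smallBound q := by
        linarith [hprod 0 2 (by decide), hprod 1 3 (by decide), hprod 2 0 (by decide),
          hprod 3 1 (by decide)]

lemma middle_row_contribution_le (hB : B ∈ V q) (hh₀ : h₀ ∈ Sp2) (hcol : HasAdaptedColumn h₀ B)
    {ℓ : Fin 5} (hℓ : ℓ ∈ ({1, 2, 3} : Finset (Fin 5))) :
    (‖(B * h₀) ℓ 1‖ ^ 2 + ‖(B * h₀) ℓ 3‖ ^ 2) * (q ℓ : ℝ) ≤ 17 / (256 * rowNormSq B 4) := by
  have hs : 0 < rowNormSq B 4 := by linarith [hB.2.2.1]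
  have hP := norm_mul_apply_one_le hB hh₀ hcol (ℓ := ℓ) (by revert ℓ; decide)
  have hQ := norm_mul_apply_three_le hB hh₀ hcol hℓ
  have hsum : ‖(B * h₀) ℓ 1‖ ^ 2 + ‖(B * h₀) ℓ 3‖ ^ 2 ≤ 17 * smallBound q ^ 2 / rowNormSq B 4 :=
    calc ‖(B * h₀) ℓ 1‖ ^ 2 + ‖(B * h₀) ℓ 3‖ ^ 2
        ≤ (smallBound q / √(rowNormSq B 4)) ^ 2 + (4 * smallBound q / √(rowNormSq B 4)) ^ 2 := by
          gcongr
      _ = 17 * smallBound q ^ 2 / rowNormSq B 4 := by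
          rw [div_pow, div_pow, Real.sq_sqrt hs.le]
          ring
  have hqm : (q ℓ : ℝ) ≤ qm q := by exact_mod_cast le_qm hℓ
  calc (‖(B * h₀) ℓ 1‖ ^ 2 + ‖(B * h₀) ℓ 3‖ ^ 2) * (q ℓ : ℝ)
      ≤ 17 * smallBound q ^ 2 / rowNormSq B 4 * qm q :=
        mul_le_mul_of_nonneg_of_nonneg_bound (by positivity) hsum hqm
          (by exact_mod_cast (V.qm_pos hB).le)
    _ = 17 / (256 * rowNormSq B 4) := by
        rw [div_mul_eq_mul_div, mul_assoc, mul_comm (smallBound q ^ 2), V.qm_mul_smallBound_sq hB]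
        field_simp

lemma first_row_weight_le (hB : B ∈ V q) (hh₀ : h₀ ∈ Sp2) :
    ‖(B * h₀) 0 1‖ ^ 2 + ‖(B * h₀) 0 3‖ ^ 2 ≤ rowNormSq B 4 :=
  (norm_sq_add_norm_sq_le_rowNormSq (B * h₀) 0).trans
    ((Sp2.rowNormSq_mul hh₀ B 0).trans_le (V.rowNormSq_zero_le hB))

lemma last_row_weight_eq (hB : B ∈ V q) (hh₀ : h₀ ∈ Sp2)
    (hcol : HasAdaptedColumn h₀ B) :
    ‖(B * h₀) 4 1‖ ^ 2 + ‖(B * h₀) 4 3‖ ^ 2 = rowNormSq B 4 := by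
  have hs : 0 < rowNormSq B 4 := by linarith [hB.2.2.1]
  have hQ : (B * h₀) 4 3 = 0 := by
    rw [mul_apply_three_eq hh₀ hcol]
    ring
  rw [mul_apply_one_four hh₀ hcol hs.ne', hQ, Complex.norm_real,
    Real.norm_of_nonneg (Real.sqrt_nonneg _), Real.sq_sqrt hs.le, norm_zero]
  ring

end AdaptedColumn

theorem stmt13_general (q : Fin 5 → ℤ)
    (h5 : q 4 < 0) (h15 : q 0 + q 4 < 0)
    (B : Matrix (Fin 5) (Fin 5) ℂ) (hB : B ∈ V q)
    (h₀ : Matrix (Fin 5) (Fin 5) ℂ) (hh₀ : h₀ ∈ Sp2)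
    (hcol : ∀ i : Fin 4, h₀ i.castSucc 1 =
      (starRingEnd ℂ) (B 4 i.castSucc) / (Real.sqrt (rowNormSq B 4) : ℂ)) :
    ∑ ℓ : Fin 5, (‖(B * h₀) ℓ 1‖ ^ 2 + ‖(B * h₀) ℓ 3‖ ^ 2)
      * (q ℓ : ℝ) < 0 := by
  set s := rowNormSq B 4
  have hs : 7 / 8 < s := hB.2.2.1
  have hq4 : (q 4 : ℝ) ≤ -1 := by exact_mod_cast (show q 4 ≤ -1 by omega)
  have hq04 : (q 0 : ℝ) + q 4 ≤ -1 := by exact_mod_cast (show q 0 + q 4 ≤ -1 by omega)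
  have hrow0 := first_row_weight_le hB hh₀
  have hrow4 := last_row_weight_eq hB hh₀ hcol
  have hrow0_nonneg : 0 ≤ ‖(B * h₀) 0 1‖ ^ 2 + ‖(B * h₀) 0 3‖ ^ 2 := by positivity
  have hends : (‖(B * h₀) 0 1‖ ^ 2 + ‖(B * h₀) 0 3‖ ^ 2) * (q 0 : ℝ)
      + (‖(B * h₀) 4 1‖ ^ 2 + ‖(B * h₀) 4 3‖ ^ 2) * (q 4 : ℝ) ≤ -s := by
    rw [hrow4]
    rcases le_total 0 (q 0 : ℝ) with hq0 | hq0 <;> nlinarith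
  have hmiddle : 3 * (17 / (256 * s)) < s := by
    rw [← mul_div_assoc, div_lt_iff₀ (by positivity)]
    nlinarith
  rw [Fin.sum_univ_five]
  linarith [middle_row_contribution_le hB hh₀ hcol (ℓ := 1) (by decide),
    middle_row_contribution_le hB hh₀ hcol (ℓ := 2) (by decide),
    middle_row_contribution_le hB hh₀ hcol (ℓ := 3) (by decide)]

theorem stmt13 (q : Fin 5 → ℤ) (hodd : ∀ i, Odd (q i))
    (h2 : 0 < q 1) (h3 : 0 < q 2) (h4 : 0 < q 3)
    (h5 : q 4 < 0) (h15 : q 0 + q 4 < 0)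
    (B : Matrix (Fin 5) (Fin 5) ℂ) (hB : B ∈ V q)
    (h₀ : Matrix (Fin 5) (Fin 5) ℂ) (hh₀ : h₀ ∈ Sp2)
    (hcol : ∀ i : Fin 4, h₀ i.castSucc 1 =
      (starRingEnd ℂ) (B 4 i.castSucc) / (Real.sqrt (rowNormSq B 4) : ℂ)) :
    ∑ ℓ : Fin 5, (‖(B * h₀) ℓ 1‖ ^ 2 + ‖(B * h₀) ℓ 3‖ ^ 2)
      * (q ℓ : ℝ) < 0 :=
  stmt13_general q h5 h15 B hB h₀ hh₀ hcol
end
end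

section
/- Let q = (q₁,...,q₅) ∈ ℤ⁵ be admissible and not a permutation of (1,1,1,-1,-3). Then there exists a permutation τ of {1,...,5} such that, setting rᵢ = q_{τ(i)}, one has r₁+r₂+r₃+r₄ ≠ 0 and, for every h ∈ Sp2, Σ_{ℓ=1}^5 (|h_{ℓ2}|² + |h_{ℓ4}|²) r_ℓ ≠ 0. -/
open Finset

noncomputable section

/-- Admissibility of a 5-tuple of integers. -/
def Admissible (q : Fin 5 → ℤ) : Prop :=
  (∀ i, Odd (q i)) ∧
  (∀ σ : Equiv.Perm (Fin 5), Int.gcd (q (σ 0) + q (σ 1)) (q (σ 2) + q (σ 3)) = 2) ∧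
  3 ≤ (Finset.univ.filter fun i => 0 < q i).card

/-! The symplectic relations make the weights `w ℓ = ‖h ℓ 1‖ ^ 2 + ‖h ℓ 3‖ ^ 2` satisfy
`w 0 = w 2`, `w 1 = w 3`, `w 4 = 0`, and `w 0 + w 1 = 1` because column `1` of a unitary matrix
is a unit vector. Hence the weighted sum is a convex combination of `r 0 + r 2` and `r 1 + r 3`,
and is nonzero once these two pair sums have the same strict sign. For a sorted admissible tuple
such a pairing exists by a short case analysis, in which the gcd condition forces every
vanishing pair sum to be complemented by a pair sum `± 2`; the only tuple escaping it is
`(-3, -1, 1, 1, 1)`. -/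

open Matrix in
theorem Matrix.sum_norm_sq_apply_eq_one_of_mem_unitaryGroup {n 𝕜 : Type*} [Fintype n]
    [DecidableEq n] [RCLike 𝕜] {U : Matrix n n 𝕜} (hU : U ∈ unitaryGroup n 𝕜) (j : n) :
    ∑ i, ‖U i j‖ ^ 2 = 1 := by
  have h := congrFun₂ (mem_unitaryGroup_iff'.1 hU) j j
  simp only [mul_apply, star_apply, one_apply_eq, RCLike.star_def, RCLike.conj_mul] at h
  exact_mod_cast h

theorem Sp2.exists_sum_col_weights_eq {h : Matrix (Fin 5) (Fin 5) ℂ} (hh : h ∈ Sp2) :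
    ∃ a ∈ Set.Icc (0 : ℝ) 1, ∀ x : Fin 5 → ℝ,
      ∑ ℓ, (‖h ℓ 1‖ ^ 2 + ‖h ℓ 3‖ ^ 2) * x ℓ = a * (x 0 + x 2) + (1 - a) * (x 1 + x 3) := by
  obtain ⟨⟨hu, -⟩, -, hrow4, hsymp⟩ := hh
  obtain ⟨h23, h21⟩ := hsymp 0 1 (by decide) (by decide)
  obtain ⟨h33, h31⟩ := hsymp 1 1 (by decide) (by decide)
  have h41 : h 4 1 = 0 := by simpa using hrow4 1
  have h43 : h 4 3 = 0 := by simpa using hrow4 3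
  have hcol := Matrix.sum_norm_sq_apply_eq_one_of_mem_unitaryGroup
    (Matrix.mem_unitaryGroup_iff.2 hu) 1
  simp only [Fin.reduceAdd] at h23 h21 h33 h31
  simp only [Fin.sum_univ_five, h21, h31, h41, h23, h33, h43, norm_neg, Complex.norm_conj,
    norm_zero] at hcol ⊢
  refine ⟨‖h 0 1‖ ^ 2 + ‖h 0 3‖ ^ 2,
    ⟨by positivity, by linarith [sq_nonneg ‖h 1 1‖, sq_nonneg ‖h 1 3‖]⟩, fun x => ?_⟩
  linear_combination (x 1 + x 3) * hcol

theorem ne_zero_of_mul_pos_of_mem_Icc {a s t : ℝ} (ha : a ∈ Set.Icc (0 : ℝ) 1)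
    (hst : 0 < s * t) : a * s + (1 - a) * t ≠ 0 := by
  intro h
  have hmem : (0 : ℝ) ∈ Set.uIcc s t := by
    rw [← segment_eq_uIcc, ← h]
    exact ⟨a, 1 - a, ha.1, sub_nonneg.2 ha.2, by ring, rfl⟩
  rcases Set.mem_uIcc.1 hmem with ⟨h1, h2⟩ | ⟨h1, h2⟩ <;> nlinarith

theorem Monotone.pos_of_card_Ioi_lt {α β : Type*} [Fintype α] [LinearOrder α]
    [LocallyFiniteOrderTop α] [Preorder β] [DecidableLT β] [Zero β] {r : α → β}
    (hr : Monotone r) {k : α} (hk : #(Ioi k) < #(univ.filter fun i => 0 < r i)) : 0 < r k := by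
  by_contra hrk
  refine hk.not_ge (card_le_card fun i hi => mem_Ioi.2 (lt_of_not_ge fun hik => hrk ?_))
  exact lt_of_lt_of_le (mem_filter.1 hi).2 (hr hik)

theorem Admissible.comp_perm {q : Fin 5 → ℤ} (hq : Admissible q) (σ : Equiv.Perm (Fin 5)) :
    Admissible (q ∘ σ) := by
  obtain ⟨hodd, hgcd, hpos⟩ := hq
  refine ⟨fun i => hodd (σ i), fun τ => hgcd (τ.trans σ), ?_⟩
  exact hpos.trans_eq (card_equiv σ fun i => by simp).symm

theorem Admissible.exists_perm_mul_pos_of_monotone {r : Fin 5 → ℤ} (hr : Admissible r)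
    (hmono : Monotone r) (hne : r ≠ ![-3, -1, 1, 1, 1]) :
    ∃ τ : Equiv.Perm (Fin 5), 0 < (r (τ 0) + r (τ 2)) * (r (τ 1) + r (τ 3)) := by
  obtain ⟨-, hgcd, hpos⟩ := hr
  have h2 : 0 < r 2 := hmono.pos_of_card_Ioi_lt (k := 2) (hpos.trans_lt' (by decide))
  have h01 := hmono (show (0 : Fin 5) ≤ 1 by decide)
  have h12 := hmono (show (1 : Fin 5) ≤ 2 by decide)
  have h23 := hmono (show (2 : Fin 5) ≤ 3 by decide)
  have h34 := hmono (show (3 : Fin 5) ≤ 4 by decide)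
  have hg : ∀ σ : Equiv.Perm (Fin 5), r (σ 0) + r (σ 1) = 0 → (r (σ 2) + r (σ 3)).natAbs = 2 :=
    fun σ h => by simpa [h] using hgcd σ
  rcases lt_trichotomy (r 4 + r 1) 0 with h41 | h41 | h41
  · exact ⟨.ofBijective ![4, 3, 1, 0, 2] (by decide),
      mul_pos_of_neg_of_neg h41 (show r 3 + r 0 < 0 by omega)⟩
  · have g30 : (r 3 + r 0).natAbs = 2 := hg (.ofBijective ![4, 1, 3, 0, 2] (by decide)) h41
    rcases (show r 3 + r 1 ≤ 0 by omega).lt_or_eq with h31 | h31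
    · exact ⟨.ofBijective ![3, 2, 1, 0, 4] (by decide),
        mul_pos_of_neg_of_neg h31 (show r 2 + r 0 < 0 by omega)⟩
    have g20 : (r 2 + r 0).natAbs = 2 := hg (.ofBijective ![3, 1, 2, 0, 4] (by decide)) h31
    rcases (show r 2 + r 1 ≤ 0 by omega).lt_or_eq with h21 | h21
    · exact ⟨.ofBijective ![2, 3, 1, 0, 4] (by decide),
        mul_pos_of_neg_of_neg h21 (show r 3 + r 0 < 0 by omega)⟩
    have g34 : (r 3 + r 4).natAbs = 2 := hg (.ofBijective ![2, 1, 3, 4, 0] (by decide)) h21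
    refine absurd (funext fun i => ?_) hne
    fin_cases i <;> simp only [Fin.zero_eta, Fin.mk_one, Fin.reduceFinMk, Matrix.cons_val] <;> omega
  · exact ⟨.ofBijective ![4, 3, 1, 2, 0] (by decide),
      mul_pos h41 (show 0 < r 3 + r 2 by omega)⟩

theorem Admissible.exists_perm_mul_pos {q : Fin 5 → ℤ} (hq : Admissible q)
    (hnp : ¬ ∃ σ : Equiv.Perm (Fin 5), ∀ i, q i = ![1, 1, 1, -1, -3] (σ i)) :
    ∃ τ : Equiv.Perm (Fin 5), 0 < (q (τ 0) + q (τ 2)) * (q (τ 1) + q (τ 3)) := by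
  set σ := Tuple.sort q
  have hne : q ∘ σ ≠ ![-3, -1, 1, 1, 1] := by
    intro hσ
    refine hnp ⟨σ.symm.trans Fin.revPerm, fun i => ?_⟩
    have hi := congrFun hσ (σ.symm i)
    simp only [Function.comp_apply, Equiv.apply_symm_apply] at hi
    rw [hi]
    show _ = ![1, 1, 1, -1, -3] (Fin.rev (σ.symm i))
    generalize σ.symm i = j
    fin_cases j <;> rfl
  obtain ⟨τ, hτ⟩ :=
    (hq.comp_perm σ).exists_perm_mul_pos_of_monotone (Tuple.monotone_sort q) hne
  exact ⟨τ.trans σ, hτ⟩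

theorem stmt15 (q : Fin 5 → ℤ) (hq : Admissible q)
    (hnp : ¬ ∃ σ : Equiv.Perm (Fin 5), ∀ i, q i = ![1, 1, 1, -1, -3] (σ i)) :
    ∃ τ : Equiv.Perm (Fin 5),
      q (τ 0) + q (τ 1) + q (τ 2) + q (τ 3) ≠ 0 ∧
      ∀ h ∈ Sp2,
        ∑ ℓ : Fin 5, (‖h ℓ 1‖ ^ 2 + ‖h ℓ 3‖ ^ 2)
          * (q (τ ℓ) : ℝ) ≠ 0 := by
  obtain ⟨τ, hτ⟩ := hq.exists_perm_mul_pos hnp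
  refine ⟨τ, ?_, fun h hh => ?_⟩
  · rcases mul_pos_iff.1 hτ with ⟨_, _⟩ | ⟨_, _⟩ <;> omega
  · obtain ⟨a, ha, hsum⟩ := Sp2.exists_sum_col_weights_eq hh
    rw [hsum fun ℓ => (q (τ ℓ) : ℝ)]
    exact ne_zero_of_mul_pos_of_mem_Icc ha (by exact_mod_cast hτ)
end
end
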